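/- arXiv:1411.6203 — 2 statements merged into one kernel-verified Lean document; each statement's English description precedes it below -/
import Mathlib

section
/- Let G = (V,E) with adjacency matrix A, let M be symmetric with entries in [0,1], M_{uv} ≤ min(M_{uu}, M_{vv}), M_{11} = 1, M_{vv} ≤ M_{1v} for all v, and suppose L(A∘M) - γ L(M) ⪰ 0 for some γ > 0, where ∘ is the entrywise (Hadamard) product and L(W) = diag(W𝟙) - W. Then the subgraph H with vertex set S = supp(diag M) and edge set supp(A∘M) is connected. -/
/-!
Let `C` be the set of vertices reachable from the anchor `0` in `H` and test the LMI against the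
indicator vector of `C`: for any weight matrix `W`, the quadratic form of `L(W)` at that vector is
the weight of the cut `(C, Cᶜ)`. No edge of `H` leaves `C`, so the cut weight of `A∘M` vanishes,
while a vertex `v ∉ C` with `Mᵥᵥ > 0` gives `M₀ᵥ ≥ Mᵥᵥ > 0` across the cut, so the form of
`L(A∘M) - γ L(M)` would be negative.
-/

/-- The unnormalized Laplacian of a symmetric weight matrix: `L(W) = diag(W𝟙) - W`. -/
def weightedLap {n : ℕ} (W : Matrix (Fin n) (Fin n) ℝ) : Matrix (Fin n) (Fin n) ℝ :=
  Matrix.diagonal (fun i => ∑ j, W i j) - W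

open Finset Matrix

def cutWeight {ι : Type*} [Fintype ι] [DecidableEq ι] (W : Matrix ι ι ℝ) (C : Finset ι) : ℝ :=
  ∑ i ∈ C, ∑ j ∈ Cᶜ, W i j

section CutWeight

variable {ι : Type*} [Fintype ι] [DecidableEq ι] {W : Matrix ι ι ℝ} {C : Finset ι}

lemma le_cutWeight (hW : ∀ i j, 0 ≤ W i j) {i j : ι} (hi : i ∈ C) (hj : j ∉ C) :
    W i j ≤ cutWeight W C :=
  calc W i j ≤ ∑ j ∈ Cᶜ, W i j :=
        single_le_sum (fun j _ => hW i j) (mem_compl.mpr hj)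
    _ ≤ cutWeight W C :=
        single_le_sum (f := fun i => ∑ j ∈ Cᶜ, W i j)
          (fun i _ => sum_nonneg fun j _ => hW i j) hi

lemma cutWeight_eq_zero (hW : ∀ i ∈ C, ∀ j ∉ C, W i j = 0) : cutWeight W C = 0 :=
  sum_eq_zero fun i hi => sum_eq_zero fun j hj => hW i hi j (mem_compl.mp hj)

end CutWeight

lemma dotProduct_weightedLap_mulVec {n : ℕ} (W : Matrix (Fin n) (Fin n) ℝ) (g : Fin n → ℝ) :
    g ⬝ᵥ (weightedLap W *ᵥ g) = ∑ i, ∑ j, W i j * g i * (g i - g j) := by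
  rw [weightedLap, sub_mulVec, dotProduct_sub]
  simp only [dotProduct, mulVec_diagonal]
  simp only [mulVec, dotProduct, Finset.mul_sum, Finset.sum_mul, ← Finset.sum_sub_distrib]
  exact sum_congr rfl fun i _ => sum_congr rfl fun j _ => by ring

lemma indicator_dotProduct_weightedLap_mulVec {n : ℕ} (W : Matrix (Fin n) (Fin n) ℝ)
    (C : Finset (Fin n)) :
    (C : Set (Fin n)).indicator 1 ⬝ᵥ (weightedLap W *ᵥ (C : Set (Fin n)).indicator 1) =
      cutWeight W C := by
  have hterm : ∀ i j, W i j * (C : Set (Fin n)).indicator 1 i *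
      ((C : Set (Fin n)).indicator 1 i - (C : Set (Fin n)).indicator 1 j) =
      if i ∈ C then (if j ∈ Cᶜ then W i j else 0) else 0 := fun i j => by
    by_cases hi : i ∈ C <;> by_cases hj : j ∈ C <;> simp [hi, hj]
  simp only [dotProduct_weightedLap_mulVec, hterm, sum_ite_irrel, sum_const_zero, sum_ite_mem,
    univ_inter, cutWeight]

lemma hadamard_adjMatrix_apply_eq_zero {V : Type*} {G : SimpleGraph V} [DecidableRel G.Adj]
    {M : Matrix V V ℝ} {i j : V} (hM : 0 ≤ M i j) (h : ¬(G.Adj i j ∧ 0 < M i j)) :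
    hadamard (G.adjMatrix ℝ) M i j = 0 := by
  rw [not_and_or, not_lt] at h
  rcases h with hG | hMij
  · simp [hG]
  · simp [le_antisymm hMij hM]

theorem lmi_feasible_implies_connected_general
    {n : ℕ} (G : SimpleGraph (Fin (n + 1))) [DecidableRel G.Adj]
    (M : Matrix (Fin (n + 1)) (Fin (n + 1)) ℝ) (γ : ℝ) (hγ : 0 < γ)
    (hrange : ∀ i j, M i j ∈ Set.Icc (0 : ℝ) 1)
    (hstar : ∀ v, M v v ≤ M 0 v)
    (hLMI : (weightedLap (Matrix.hadamard (G.adjMatrix ℝ) M) - γ • weightedLap M).PosSemidef) :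
    ∀ u, M u u ≠ 0 → ∀ v, M v v ≠ 0 →
      (SimpleGraph.fromRel fun x y => G.Adj x y ∧ 0 < M x y).Reachable u v := by
  classical
  set H := SimpleGraph.fromRel fun x y => G.Adj x y ∧ 0 < M x y
  suffices h0 : ∀ v, M v v ≠ 0 → H.Reachable 0 v from
    fun u hu v hv => (h0 u hu).symm.trans (h0 v hv)
  intro v hv
  by_contra hv0
  have hM : ∀ i j, 0 ≤ M i j := fun i j => (hrange i j).1
  let C : Finset (Fin (n + 1)) := {x | H.Reachable 0 x}
  have hcutA : cutWeight (hadamard (G.adjMatrix ℝ) M) C = 0 := by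
    refine cutWeight_eq_zero fun i hi j hj =>
      hadamard_adjMatrix_apply_eq_zero (hM i j) fun hij => ?_
    simp only [C, mem_filter, mem_univ, true_and] at hi hj
    exact hj (hi.trans (SimpleGraph.fromRel_adj .. |>.mpr ⟨hij.1.ne, .inl hij⟩).reachable)
  have hcutM : M 0 v ≤ cutWeight M C :=
    le_cutWeight hM (by simp [C]) (by simpa [C] using hv0)
  have hM0v : 0 < M 0 v := (lt_of_le_of_ne (hM v v) (Ne.symm hv)).trans_le (hstar v)
  have hform := hLMI.dotProduct_mulVec_nonneg ((C : Set (Fin (n + 1))).indicator 1)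
  rw [sub_mulVec, smul_mulVec, dotProduct_sub, dotProduct_smul, star_trivial,
    indicator_dotProduct_weightedLap_mulVec, indicator_dotProduct_weightedLap_mulVec,
    hcutA, smul_eq_mul] at hform
  linarith [mul_pos hγ (hM0v.trans_le hcutM)]

/-- If `M` is an anchored matrix (symmetric, entries in `[0,1]`, `M_{11} = 1`,
`M_{uv} ≤ min(M_{uu}, M_{vv})`, `M_{vv} ≤ M_{1v}`) satisfying the LMI
`L(A∘M) - γ L(M) ⪰ 0` for some `γ > 0`, then the subgraph with vertex set
`S = supp(diag M)` and edge set `supp(A∘M)` is connected. -/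
theorem lmi_feasible_implies_connected
    {n : ℕ} (G : SimpleGraph (Fin (n + 1))) [DecidableRel G.Adj]
    (M : Matrix (Fin (n + 1)) (Fin (n + 1)) ℝ) (γ : ℝ) (hγ : 0 < γ)
    (hsym : M.IsSymm)
    (hrange : ∀ i j, M i j ∈ Set.Icc (0 : ℝ) 1)
    (hdom : ∀ u v, M u v ≤ min (M u u) (M v v))
    (hanchor : M 0 0 = 1)
    (hstar : ∀ v, M v v ≤ M 0 v)
    (hLMI : (weightedLap (Matrix.hadamard (G.adjMatrix ℝ) M) - γ • weightedLap M).PosSemidef) :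
    ∀ u, M u u ≠ 0 → ∀ v, M v v ≠ 0 →
      (SimpleGraph.fromRel fun x y => G.Adj x y ∧ 0 < M x y).Reachable u v :=
  lmi_feasible_implies_connected_general G M γ hγ hrange hstar hLMI
end

section
/- Let G be a graph with maximum degree D and consider any M feasible for the LMI constraints: M symmetric with entries in [0,1], M_{11}=1, M_{uv} ≤ min(M_{uu},M_{vv}), M_{vv} ≤ M_{1v}, and L(A∘M) - γ L(M) ⪰ 0 with 0 < γ < 1. Then trace(M) ≤ D/γ + 1 (up to the anchor term; in particular trace(M) = O(D/γ)). -/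
/-!
Testing the LMI against the anchor's unit vector (equivalently, placing every non-anchor vertex
at one common point) gives `γ ∑_{j ≠ 0} M₀ⱼ ≤ ∑_{j ≠ 0} A₀ⱼ M₀ⱼ ≤ deg 0 ≤ D`, since the
diagonal entry of a Laplacian is the off-diagonal row sum and `M ≤ 1`. The star condition
`Mⱼⱼ ≤ M₀ⱼ` together with `M₀₀ = 1` then bounds `trace M - 1` by `∑_{j ≠ 0} M₀ⱼ ≤ D / γ`.
-/

open Finset Matrix

theorem weightedLap_apply_self {n : ℕ} (W : Matrix (Fin n) (Fin n) ℝ) (i : Fin n) :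
    weightedLap W i i = ∑ j ∈ univ.erase i, W i j := by
  rw [weightedLap, Matrix.sub_apply, diagonal_apply_eq, ← add_sum_erase _ _ (mem_univ i)]
  ring

namespace SimpleGraph

variable {V : Type*} (G : SimpleGraph V) [DecidableRel G.Adj]

theorem adjMatrix_apply_nonneg (v w : V) : 0 ≤ G.adjMatrix ℝ v w := by
  rw [adjMatrix_apply]; split_ifs <;> norm_num

variable [Fintype V]

theorem sum_adjMatrix_row (v : V) : ∑ w, G.adjMatrix ℝ v w = G.degree v := by
  simp [adjMatrix_apply, sum_boole, ← neighborFinset_eq_filter]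

theorem sum_adjMatrix_hadamard_le_degree {W : Matrix V V ℝ} {v : V}
    (hW : ∀ w, W v w ≤ 1) (s : Finset V) :
    ∑ w ∈ s, (G.adjMatrix ℝ ⊙ W) v w ≤ G.degree v :=
  calc ∑ w ∈ s, (G.adjMatrix ℝ ⊙ W) v w
      ≤ ∑ w ∈ s, G.adjMatrix ℝ v w :=
        sum_le_sum fun w _ => mul_le_of_le_one_right (G.adjMatrix_apply_nonneg v w) (hW w)
    _ ≤ ∑ w, G.adjMatrix ℝ v w :=
        sum_le_sum_of_subset_of_nonneg (subset_univ s) fun w _ _ => G.adjMatrix_apply_nonneg v w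
    _ = G.degree v := G.sum_adjMatrix_row v

end SimpleGraph

theorem lmi_feasible_trace_bound_general
    {n : ℕ} (G : SimpleGraph (Fin (n + 1))) [DecidableRel G.Adj]
    (D : ℕ) (hD : ∀ v, G.degree v ≤ D)
    (M : Matrix (Fin (n + 1)) (Fin (n + 1)) ℝ) (γ : ℝ) (hγ0 : 0 < γ)
    (hrange : ∀ i j, M i j ∈ Set.Icc (0 : ℝ) 1)
    (hanchor : M 0 0 = 1)
    (hstar : ∀ v, M v v ≤ M 0 v)
    (hLMI : (weightedLap (Matrix.hadamard (G.adjMatrix ℝ) M) - γ • weightedLap M).PosSemidef) :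
    M.trace ≤ (D : ℝ) / γ + 1 := by
  set S := ∑ j ∈ univ.erase 0, M 0 j
  have hlap : γ * S ≤ ∑ j ∈ univ.erase 0, (G.adjMatrix ℝ ⊙ M) 0 j := by
    have h := hLMI.diag_nonneg (i := 0)
    rw [Matrix.sub_apply, Matrix.smul_apply, weightedLap_apply_self, weightedLap_apply_self,
      smul_eq_mul] at h
    linarith
  have hdeg : ∑ j ∈ univ.erase 0, (G.adjMatrix ℝ ⊙ M) 0 j ≤ D :=
    (G.sum_adjMatrix_hadamard_le_degree (fun j => (hrange 0 j).2) _).trans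
      (by exact_mod_cast hD 0)
  have htrace : M.trace ≤ 1 + S := by
    rw [trace, ← add_sum_erase _ _ (mem_univ 0), diag_apply, hanchor]
    exact add_le_add_right (sum_le_sum fun j _ => hstar j) 1
  have hS : S ≤ D / γ := by rw [le_div_iff₀ hγ0]; linarith
  linarith

/-- Trace bound for LMI-feasible matrices: on a graph of maximum degree `D`,
any `M` feasible for the anchored LMI constraints with `0 < γ < 1` satisfies
`trace(M) ≤ D/γ + 1`. -/
theorem lmi_feasible_trace_bound
    {n : ℕ} (G : SimpleGraph (Fin (n + 1))) [DecidableRel G.Adj]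
    (D : ℕ) (hD : ∀ v, G.degree v ≤ D)
    (M : Matrix (Fin (n + 1)) (Fin (n + 1)) ℝ) (γ : ℝ) (hγ0 : 0 < γ) (hγ1 : γ < 1)
    (hsym : M.IsSymm)
    (hrange : ∀ i j, M i j ∈ Set.Icc (0 : ℝ) 1)
    (hdom : ∀ u v, M u v ≤ min (M u u) (M v v))
    (hanchor : M 0 0 = 1)
    (hstar : ∀ v, M v v ≤ M 0 v)
    (hLMI : (weightedLap (Matrix.hadamard (G.adjMatrix ℝ) M) - γ • weightedLap M).PosSemidef) :
    M.trace ≤ (D : ℝ) / γ + 1 :=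
  lmi_feasible_trace_bound_general G D hD M γ hγ0 hrange hanchor hstar hLMI
end
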